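/- arXiv:math/0609679 — 2 statements merged into one kernel-verified Lean document; each statement's English description precedes it below -/
import Mathlib

section
/- Let (Ω, ℱ, ℙ) be a probability space with a filtration (ℱ_t)_{t ≥ 0}, and let (X_t)_{t ≥ 0} be a real-valued adapted process such that X_0 is constant and, for all 0 ≤ s ≤ t, the increment X_t − X_s is independent of ℱ_s and has the Gaussian law N(0, t − s). Then for all 0 ≤ s ≤ t and all n ∈ ℕ, E[X_t^n | ℱ_s] = H_n(X_s, s − t) almost surely. In particular, for fixed t, the process (H_n(X_s, s − t))_{0 ≤ s ≤ t} is a martingale. -/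
open MeasureTheory ProbabilityTheory
open scoped NNReal ENNReal

/-- The `n`-th space–time Hermite polynomial
`H_n(x, t) = Σ_{j=0}^{⌊n/2⌋} (n! / (j! (n-2j)! 2^j)) (-t)^j x^(n-2j)`. -/
noncomputable def hermiteST (n : ℕ) (x t : ℝ) : ℝ :=
  ∑ j ∈ Finset.range (n / 2 + 1),
    ((n.factorial : ℝ) / ((j.factorial : ℝ) * ((n - 2 * j).factorial : ℝ) * 2 ^ j))
      * (-t) ^ j * x ^ (n - 2 * j)

/-!
Write `X_t = X_s + Z` with `Z = X_t - X_s ~ N(0, v)`, `v = t - s`. Expanding `(X_s + Z)^n`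
binomially, `X_s` is `ℱ_s`-measurable and `Z` is independent of `ℱ_s`, so `E[X_t^n | ℱ_s]` is
`y ↦ E[(y + Z)^n]` evaluated at `y = X_s`. The Gaussian moments satisfy
`E[Z^(n+2)] = (n+1) v E[Z^n]` (differentiate the mgf `exp (v t^2 / 2)`, whose derivative is
`v t exp (v t^2 / 2)`), so the odd ones vanish and `E[Z^(2j)] = v^j (2j)! / (2^j j!)`, which
turns the binomial sum into `H_n(y, -v)`. The martingale property is then the tower property.
-/

open Real

lemma iteratedDeriv_add_two_exp_mul_sq_div_two_zero (v : ℝ) (n : ℕ) :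
    iteratedDeriv (n + 2) (fun t => rexp (v * t ^ 2 / 2)) 0
      = (n + 1) * v * iteratedDeriv n (fun t => rexp (v * t ^ 2 / 2)) 0 := by
  have hderiv : deriv (fun t => rexp (v * t ^ 2 / 2)) =
      fun t => (v * t) * rexp (v * t ^ 2 / 2) := by
    funext t
    rw [((((hasDerivAt_pow 2 t).const_mul v).div_const 2).exp).deriv]
    push_cast
    ring
  have hlin : ∀ i, iteratedDeriv i (fun t : ℝ => v * t) 0 = if i = 1 then v else 0 := by
    intro i
    rw [iteratedDeriv_const_mul (f := fun t => t) v (by fun_prop), iteratedDeriv_fun_id_zero]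
    simp
  rw [iteratedDeriv_succ', hderiv, iteratedDeriv_fun_mul (by fun_prop) (by fun_prop),
    Finset.sum_eq_single 1 (fun i _ hi => by simp [hlin, hi]) (by simp)]
  simp [hlin]

lemma integral_pow_gaussianReal_eq_iteratedDeriv (v : ℝ≥0) (n : ℕ) :
    ∫ x, x ^ n ∂gaussianReal 0 v = iteratedDeriv n (fun t => rexp (v * t ^ 2 / 2)) 0 := by
  have := iteratedDeriv_mgf_zero (X := fun x : ℝ => x) (μ := gaussianReal 0 v) (by simp) n
  rw [mgf_fun_id_gaussianReal] at this
  simpa using this.symm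

lemma integral_pow_add_two_gaussianReal (v : ℝ≥0) (n : ℕ) :
    ∫ x, x ^ (n + 2) ∂gaussianReal 0 v = (n + 1) * v * ∫ x, x ^ n ∂gaussianReal 0 v := by
  simp only [integral_pow_gaussianReal_eq_iteratedDeriv,
    iteratedDeriv_add_two_exp_mul_sq_div_two_zero]

lemma integral_pow_odd_gaussianReal (v : ℝ≥0) (j : ℕ) :
    ∫ x, x ^ (2 * j + 1) ∂gaussianReal 0 v = 0 := by
  induction j with
  | zero => simp
  | succ j ih => rw [show 2 * (j + 1) + 1 = 2 * j + 1 + 2 by ring,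
      integral_pow_add_two_gaussianReal, ih, mul_zero]

lemma integral_pow_even_gaussianReal (v : ℝ≥0) (j : ℕ) :
    ∫ x, x ^ (2 * j) ∂gaussianReal 0 v = v ^ j * (2 * j).factorial / (2 ^ j * j.factorial) := by
  induction j with
  | zero => simp
  | succ j ih =>
    rw [show 2 * (j + 1) = 2 * j + 2 by ring, integral_pow_add_two_gaussianReal, ih]
    simp only [Nat.factorial_succ]
    push_cast
    field_simp
    ring

lemma integrable_pow_gaussianReal (μ : ℝ) (v : ℝ≥0) (k : ℕ) :
    Integrable (fun x : ℝ => x ^ k) (gaussianReal μ v) :=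
  (memLp_id_gaussianReal k).integrable_norm_pow'.mono' (by fun_prop)
    (ae_of_all _ fun x => by simp)

lemma sum_choose_mul_moments_eq_hermiteST (n : ℕ) (x u : ℝ) (m : ℕ → ℝ)
    (hodd : ∀ j, m (2 * j + 1) = 0)
    (heven : ∀ j, m (2 * j) = u ^ j * (2 * j).factorial / (2 ^ j * j.factorial)) :
    ∑ k ∈ Finset.range (n + 1), m k * x ^ (n - k) * n.choose k = hermiteST n x (-u) := by
  have hsub : (Finset.range (n / 2 + 1)).image (2 * ·) ⊆ Finset.range (n + 1) := by
    intro k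
    simp only [Finset.mem_image, Finset.mem_range]
    omega
  rw [← Finset.sum_subset hsub, Finset.sum_image (by intro a _ b _ h; simpa using h), hermiteST]
  · refine Finset.sum_congr rfl fun j hj => ?_
    have hjn : 2 * j ≤ n := by simp only [Finset.mem_range] at hj; omega
    rw [heven, neg_neg, Nat.cast_choose ℝ hjn]
    field_simp
  · intro k hkn hk
    obtain ⟨j, rfl⟩ : ∃ j, k = 2 * j + 1 := by
      refine ⟨k / 2, ?_⟩
      simp only [Finset.mem_image, Finset.mem_range, not_exists, not_and] at hk hkn
      have := hk (k / 2)
      omega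
    rw [hodd, zero_mul, zero_mul]

lemma integral_add_pow_gaussianReal (x : ℝ) (v : ℝ≥0) (n : ℕ) :
    ∫ z, (x + z) ^ n ∂gaussianReal 0 v = hermiteST n x (-v) := by
  simp_rw [add_comm x, add_pow]
  rw [integral_finsetSum _ fun k _ =>
    ((integrable_pow_gaussianReal 0 v k).mul_const _).mul_const _]
  simp only [integral_mul_const]
  exact sum_choose_mul_moments_eq_hermiteST n x v _ (integral_pow_odd_gaussianReal v)
    (integral_pow_even_gaussianReal v)

section

variable {Ω : Type*} {m₁ m m0 : MeasurableSpace Ω} {P : Measure Ω}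

lemma integrable_pow_of_map_eq_gaussianReal {Z : Ω → ℝ} {μ : ℝ} {v : ℝ≥0} (hZ : Measurable Z)
    (hlaw : P.map Z = gaussianReal μ v) (k : ℕ) : Integrable (fun ω => Z ω ^ k) P := by
  have h := integrable_pow_gaussianReal μ v k
  rw [← hlaw] at h
  exact (integrable_map_measure (measurable_id.pow_const k).aestronglyMeasurable
    hZ.aemeasurable).mp h

lemma map_add_const_eq_gaussianReal {W : Ω → ℝ} {μ : ℝ} {v : ℝ≥0} (hW : Measurable W)
    (hlaw : P.map W = gaussianReal μ v) (c : ℝ) :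
    P.map (fun ω => W ω + c) = gaussianReal (μ + c) v := by
  rw [← gaussianReal_map_add_const, ← hlaw, Measure.map_map (measurable_add_const c) hW]
  rfl

lemma condExp_mul_eq_mul_integral_of_indep (hm₁ : m₁ ≤ m0)
    (hm : m ≤ m0) [SigmaFinite (P.trim hm)] {f g : Ω → ℝ} (hf : Measurable[m] f)
    (hg : Measurable[m₁] g) (hindep : Indep m₁ m P) (hfg : Integrable (f * g) P)
    (hgint : Integrable g P) :
    P[f * g|m] =ᵐ[P] fun ω => f ω * ∫ ω', g ω' ∂P := by
  have h1 := condExp_mul_of_stronglyMeasurable_left hf.stronglyMeasurable hfg hgint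
  have h2 := condExp_indep_eq hm₁ hm hg.stronglyMeasurable hindep
  filter_upwards [h1, h2] with ω h1 h2
  rw [h1, Pi.mul_apply, h2]

lemma condExp_add_pow_of_indep [IsFiniteMeasure P] (hm : m ≤ m0)
    {Y Z : Ω → ℝ} (hY : Measurable[m] Y) (hZ : Measurable Z)
    (hYint : ∀ k, Integrable (fun ω => Y ω ^ k) P) (hZint : ∀ k, Integrable (fun ω => Z ω ^ k) P)
    (hindep : Indep (MeasurableSpace.comap Z inferInstance) m P) (n : ℕ) :
    P[fun ω => (Y ω + Z ω) ^ n|m] =ᵐ[P] fun ω => ∫ ω', (Y ω + Z ω') ^ n ∂P := by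
  set F : ℕ → Ω → ℝ := fun k => (fun ω => Y ω ^ (n - k) * n.choose k) * fun ω => Z ω ^ k
  have hexpand : ∀ y z : ℝ, (y + z) ^ n =
      ∑ k ∈ Finset.range (n + 1), y ^ (n - k) * n.choose k * z ^ k := fun y z => by
    rw [add_comm, add_pow]
    exact Finset.sum_congr rfl fun k _ => by ring
  have hYZ : IndepFun Z Y P := indep_of_indep_of_le_right hindep (measurable_iff_comap_le.mp hY)
  have hFint : ∀ k ∈ Finset.range (n + 1), Integrable (F k) P := fun k _ => by
    have := (hYZ.comp (measurable_id.pow_const k) (measurable_id.pow_const (n - k))).integrable_mul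
      (hZint k) (hYint (n - k))
    exact (this.mul_const (n.choose k : ℝ)).congr (ae_of_all _ fun ω => by simp [F]; ring)
  have hF : (fun ω => (Y ω + Z ω) ^ n) = ∑ k ∈ Finset.range (n + 1), F k := by
    funext ω
    simp only [hexpand, Finset.sum_apply, F, Pi.mul_apply]
  have hterm : ∀ k ∈ Finset.range (n + 1), P[F k|m] =ᵐ[P]
      fun ω => Y ω ^ (n - k) * n.choose k * ∫ ω', Z ω' ^ k ∂P := fun k hk =>
    condExp_mul_eq_mul_integral_of_indep (measurable_iff_comap_le.mp hZ) hm
      ((hY.pow_const _).mul_const _) ((comap_measurable Z).pow_const k) hindep (hFint k hk)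
      (hZint k)
  rw [hF]
  refine (condExp_finsetSum hFint m).trans ((eventuallyEq_sum hterm).trans (.of_eq ?_))
  funext ω
  simp only [Finset.sum_apply, hexpand]
  rw [integral_finsetSum _ fun k _ => (hZint k).const_mul _]
  simp only [integral_const_mul]

lemma condExp_add_pow_eq_hermiteST [IsFiniteMeasure P] (hm : m ≤ m0) {Y Z : Ω → ℝ} {v : ℝ≥0}
    (hY : Measurable[m] Y) (hYint : ∀ k, Integrable (fun ω => Y ω ^ k) P) (hZ : Measurable Z)
    (hindep : Indep (MeasurableSpace.comap Z inferInstance) m P)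
    (hlaw : P.map Z = gaussianReal 0 v) (n : ℕ) :
    P[fun ω => (Y ω + Z ω) ^ n|m] =ᵐ[P] fun ω => hermiteST n (Y ω) (-v) := by
  refine (condExp_add_pow_of_indep hm hY hZ hYint
    (integrable_pow_of_map_eq_gaussianReal hZ hlaw) hindep n).trans (.of_eq ?_)
  funext ω
  rw [← integral_add_pow_gaussianReal, ← hlaw, integral_map hZ.aemeasurable (by fun_prop)]

end

/-- Let `(X_t)_{t ≥ 0}` be a real adapted process starting from a constant, whose increments
`X_t - X_s` (for `0 ≤ s ≤ t`) are independent of `ℱ_s` with law `N(0, t - s)`.  Then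
`E[X_t^n | ℱ_s] = H_n(X_s, s - t)` a.s. for `0 ≤ s ≤ t`; in particular, for every fixed `t`,
the process `(H_n(X_s, s - t))_{0 ≤ s ≤ t}` is a martingale. -/
theorem condexp_pow_eq_hermiteST
    (Ω : Type*) [m0 : MeasurableSpace Ω] (P : Measure Ω) [IsProbabilityMeasure P]
    (ℱ : Filtration ℝ m0) (X : ℝ → Ω → ℝ) (hadapt : Adapted ℱ X)
    (hX0 : ∃ c : ℝ, X 0 = fun _ => c)
    (hindep : ∀ s t : ℝ, 0 ≤ s → s ≤ t →
      Indep (MeasurableSpace.comap (fun ω => X t ω - X s ω) inferInstance) (ℱ s) P)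
    (hlaw : ∀ s t : ℝ, 0 ≤ s → s ≤ t →
      P.map (fun ω => X t ω - X s ω) = gaussianReal 0 (t - s).toNNReal) :
    (∀ s t : ℝ, 0 ≤ s → s ≤ t → ∀ n : ℕ,
      P[fun ω => (X t ω) ^ n|ℱ s] =ᵐ[P] fun ω => hermiteST n (X s ω) (s - t))
    ∧ (∀ t : ℝ, ∀ n : ℕ, ∀ s' s : ℝ, 0 ≤ s' → s' ≤ s → s ≤ t →
      P[fun ω => hermiteST n (X s ω) (s - t)|ℱ s'] =ᵐ[P]
        fun ω => hermiteST n (X s' ω) (s' - t)) := by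
  obtain ⟨c, hc⟩ := hX0
  have hmeas : ∀ r, Measurable (X r) := fun r => (hadapt r).mono (ℱ.le r) le_rfl
  have hlaw_X : ∀ s, 0 ≤ s → P.map (X s) = gaussianReal c s.toNNReal := fun s hs => by
    have h := map_add_const_eq_gaussianReal ((hmeas s).sub (hmeas 0)) (hlaw 0 s le_rfl hs) c
    simpa [hc] using h
  have hcondExp : ∀ s t : ℝ, 0 ≤ s → s ≤ t → ∀ n : ℕ,
      P[fun ω => (X t ω) ^ n|ℱ s] =ᵐ[P] fun ω => hermiteST n (X s ω) (s - t) := by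
    intro s t hs hst n
    have h := condExp_add_pow_eq_hermiteST (ℱ.le s) (hadapt s)
      (integrable_pow_of_map_eq_gaussianReal (hmeas s) (hlaw_X s hs)) ((hmeas t).sub (hmeas s))
      (hindep s t hs hst) (hlaw s t hs hst) n
    simpa [Real.coe_toNNReal _ (sub_nonneg.2 hst)] using h
  refine ⟨hcondExp, fun t n s' s hs' hs's hst => ?_⟩
  calc P[fun ω => hermiteST n (X s ω) (s - t)|ℱ s']
      =ᵐ[P] P[P[fun ω => X t ω ^ n|ℱ s]|ℱ s'] :=
        condExp_congr_ae (hcondExp s t (hs'.trans hs's) hst n).symm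
    _ =ᵐ[P] P[fun ω => X t ω ^ n|ℱ s'] := condExp_condExp_of_le (ℱ.mono hs's) (ℱ.le s)
    _ =ᵐ[P] fun ω => hermiteST n (X s' ω) (s' - t) := hcondExp s' t hs' (hs's.trans hst) n
end

section
/- Let d ≥ 2, let e be a unit vector in ℝ^d, and let r > −1. Then the function θ ↦ |⟨θ, e⟩|^r is integrable on the unit sphere S^{d−1} with respect to the surface (uniform) measure: ∫_{S^{d−1}} |⟨θ, e⟩|^r dσ(θ) < ∞. -/
open MeasureTheory
open RealInnerProductSpace

/-! Polar coordinates split Lebesgue measure on `ℝ^d \ {0}` as `σ ⊗ t^(d-1) dt`, so the integral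
of `|⟪x, e⟫|^r` over the unit ball is `∫ |⟪θ, e⟫|^r dσ(θ)` times the positive number
`∫₀¹ t^(r+d-1) dt`. The ball integral is finite: in an orthonormal basis containing `e` the ball
lies in the cube `(-1, 1)^d`, over which the integral factors through `∫₋₁¹ |t|^r dt < ∞`. -/

open Set Metric
open scoped ENNReal

lemma integrableOn_ball_abs_rpow {r : ℝ} (hr : -1 < r) :
    IntegrableOn (fun t : ℝ => |t| ^ r) (ball 0 1) :=
  integrableOn_ball_of_norm_le_rpow (C := 1) (α := -r) (by simp) (by simpa using neg_lt.2 hr)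
    (ae_of_all _ fun t => by simp [abs_of_nonneg (Real.rpow_nonneg (abs_nonneg t) r)])
    (continuous_abs.measurable.pow_const r).aestronglyMeasurable

lemma lintegral_ball_pi_abs_rpow_lt_top {ι : Type*} [Fintype ι] (i : ι) {r : ℝ} (hr : -1 < r) :
    ∫⁻ x in ball (0 : ι → ℝ) 1, ENNReal.ofReal (|x i| ^ r) < ⊤ := by
  classical
  rw [ball_pi _ one_pos, volume_pi, Measure.restrict_pi_pi,
    ← lintegral_map (f := fun t => ENNReal.ofReal (|t| ^ r)) (by fun_prop) (measurable_pi_apply i),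
    Measure.pi_map_eval, lintegral_smul_measure]
  refine ENNReal.mul_lt_top ?_ (integrableOn_ball_abs_rpow hr).setLIntegral_lt_top
  exact ENNReal.prod_lt_top fun j _ => by simp

section InnerProductSpace

variable {E : Type*} [NormedAddCommGroup E] [InnerProductSpace ℝ E]

lemma abs_inner_smul_norm_inv_rpow_mul {x : E} (hx : x ≠ 0) (e : E) (r : ℝ) :
    |⟪‖x‖⁻¹ • x, e⟫| ^ r * ‖x‖ ^ r = |⟪x, e⟫| ^ r := by
  rw [real_inner_smul_left, abs_mul, abs_inv, abs_norm,
    ← Real.mul_rpow (by positivity) (norm_nonneg x), mul_right_comm,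
    inv_mul_cancel₀ (norm_ne_zero_iff.2 hx), one_mul]

variable [FiniteDimensional ℝ E] [MeasurableSpace E] [BorelSpace E]

lemma lintegral_ball_abs_inner_rpow_lt_top {e : E} (he : ‖e‖ = 1) {r : ℝ} (hr : -1 < r) :
    ∫⁻ x in ball (0 : E) 1, ENNReal.ofReal (|⟪x, e⟫| ^ r) < ⊤ := by
  have he_orth : Orthonormal ℝ ((↑) : ({e} : Set E) → E) := by
    simp only [orthonormal_subsingleton_iff, Subtype.forall, mem_singleton_iff, forall_eq, he]
  obtain ⟨u, b, heu, hb⟩ := he_orth.exists_orthonormalBasis_extension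
  let i : u := ⟨e, heu rfl⟩
  let φ : E → (u → ℝ) := (MeasurableEquiv.toLp 2 (u → ℝ)).symm ∘ b.repr
  have hφ : MeasurePreserving φ :=
    (EuclideanSpace.volume_preserving_symm_measurableEquiv_toLp u).comp b.measurePreserving_repr
  have hinner (x : E) : ⟪x, e⟫ = φ x i := by
    simp [φ, b.repr_apply_apply, hb, i, real_inner_comm]
  have hball : ball (0 : E) 1 ⊆ φ ⁻¹' ball 0 1 := fun x hx => by
    rw [mem_preimage, mem_ball_zero_iff, pi_norm_lt_iff one_pos]
    intro j
    exact (PiLp.norm_apply_le (b.repr x) j).trans_lt (by simpa using hx)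
  calc ∫⁻ x in ball (0 : E) 1, ENNReal.ofReal (|⟪x, e⟫| ^ r)
      ≤ ∫⁻ x in φ ⁻¹' ball 0 1, ENNReal.ofReal (|φ x i| ^ r) := by
        simp only [hinner]
        exact lintegral_mono_set hball
    _ = ∫⁻ y in ball (0 : u → ℝ) 1, ENNReal.ofReal (|y i| ^ r) :=
        hφ.setLIntegral_comp_preimage measurableSet_ball
          (f := fun y => ENNReal.ofReal (|y i| ^ r)) (by fun_prop)
    _ < ⊤ := lintegral_ball_pi_abs_rpow_lt_top i hr

end InnerProductSpace

section Polar

variable {F : Type*} [NormedAddCommGroup F] [NormedSpace ℝ F] [FiniteDimensional ℝ F]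
  [MeasurableSpace F] [BorelSpace F] (μ : Measure F) [μ.IsAddHaarMeasure]

theorem setLIntegral_compl_zero_eq_lintegral_toSphere_mul {g : F → ℝ≥0∞} {h : ℝ → ℝ≥0∞}
    (hg : Measurable g) (hh : Measurable h) :
    ∫⁻ x in {0}ᶜ, g (‖x‖⁻¹ • x) * h ‖x‖ ∂μ =
      (∫⁻ θ : sphere (0 : F) 1, g θ ∂μ.toSphere) *
        ∫⁻ t : Ioi (0 : ℝ), h t ∂Measure.volumeIoiPow (Module.finrank ℝ F - 1) := by
  rw [← lintegral_subtype_comap (measurableSet_singleton 0).compl,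
    ← lintegral_prod_mul (f := fun θ : sphere (0 : F) 1 => g θ) (g := fun t : Ioi (0 : ℝ) => h t)
      (by fun_prop) (by fun_prop),
    ← μ.measurePreserving_homeomorphUnitSphereProd.lintegral_comp (by fun_prop)]
  simp

end Polar

lemma lintegral_volumeIoiPow_indicator_rpow_ne_zero (n : ℕ) (r : ℝ) :
    ∫⁻ t : Ioi (0 : ℝ), (Iio 1).indicator (fun s => ENNReal.ofReal (s ^ r)) (t : ℝ)
      ∂Measure.volumeIoiPow n ≠ 0 := by
  let one : Ioi (0 : ℝ) := ⟨1, mem_Ioi.2 one_pos⟩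
  refine ((lintegral_pos_iff_support ?_).2 ?_).ne'
  · exact ((by fun_prop : Measurable _).indicator measurableSet_Iio).comp measurable_subtype_coe
  calc 0 < Measure.volumeIoiPow n (Iio one) := by
        rw [Measure.volumeIoiPow_apply_Iio]
        simp only [one, one_pow, ENNReal.ofReal_pos]
        positivity
    _ ≤ _ := measure_mono fun t (ht : (t : ℝ) < 1) => by
        simpa [indicator_of_mem (mem_Iio.2 ht)] using Real.rpow_pos_of_pos t.2 r

theorem sphere_inner_rpow_integrable_general
    (d : ℕ) (e : EuclideanSpace ℝ (Fin d)) (he : ‖e‖ = 1)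
    (r : ℝ) (hr : -1 < r) :
    ∫⁻ θ : Metric.sphere (0 : EuclideanSpace ℝ (Fin d)) 1,
        ENNReal.ofReal (|⟪(θ : EuclideanSpace ℝ (Fin d)), e⟫| ^ r)
        ∂((volume : Measure (EuclideanSpace ℝ (Fin d))).toSphere) < ⊤ := by
  let g : EuclideanSpace ℝ (Fin d) → ℝ≥0∞ := fun x => ENNReal.ofReal (|⟪x, e⟫| ^ r)
  let h : ℝ → ℝ≥0∞ := (Iio 1).indicator fun t => ENNReal.ofReal (t ^ r)
  have hpolar : ∀ x ∈ ({0}ᶜ : Set _), g (‖x‖⁻¹ • x) * h ‖x‖ = (ball 0 1).indicator g x := by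
    intro x hx
    simp only [g, h]
    by_cases hx1 : ‖x‖ < 1
    · rw [indicator_of_mem (mem_ball_zero_iff.2 hx1), indicator_of_mem (mem_Iio.2 hx1),
        ← ENNReal.ofReal_mul (by positivity), abs_inner_smul_norm_inv_rpow_mul hx]
    · rw [indicator_of_notMem (mt mem_Iio.1 hx1), mul_zero,
        indicator_of_notMem (mt mem_ball_zero_iff.1 hx1)]
  have hfinite : ∫⁻ x in {0}ᶜ, g (‖x‖⁻¹ • x) * h ‖x‖ < ⊤ := calc
    _ = ∫⁻ x in {0}ᶜ, (ball 0 1).indicator g x :=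
        setLIntegral_congr_fun (measurableSet_singleton 0).compl hpolar
    _ ≤ ∫⁻ x, (ball 0 1).indicator g x := setLIntegral_le_lintegral _ _
    _ = ∫⁻ x in ball 0 1, g x := lintegral_indicator measurableSet_ball _
    _ < ⊤ := lintegral_ball_abs_inner_rpow_lt_top he hr
  rw [setLIntegral_compl_zero_eq_lintegral_toSphere_mul volume (by fun_prop)
    ((by fun_prop : Measurable _).indicator measurableSet_Iio)] at hfinite
  exact ENNReal.lt_top_of_mul_ne_top_left hfinite.ne
    (lintegral_volumeIoiPow_indicator_rpow_ne_zero _ r)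

/-- For `d ≥ 2`, a unit vector `e ∈ ℝ^d` and `r > -1`, the function `θ ↦ |⟨θ, e⟩|^r` is
integrable on the unit sphere `S^{d-1}` with respect to the surface measure
(`volume.toSphere`). -/
theorem sphere_inner_rpow_integrable
    (d : ℕ) (hd : 2 ≤ d) (e : EuclideanSpace ℝ (Fin d)) (he : ‖e‖ = 1)
    (r : ℝ) (hr : -1 < r) :
    ∫⁻ θ : Metric.sphere (0 : EuclideanSpace ℝ (Fin d)) 1,
        ENNReal.ofReal (|⟪(θ : EuclideanSpace ℝ (Fin d)), e⟫| ^ r)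
        ∂((volume : Measure (EuclideanSpace ℝ (Fin d))).toSphere) < ⊤ :=
  sphere_inner_rpow_integrable_general d e he r hr
end
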